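/- arXiv:2206.07588 — 4 statements merged into one kernel-verified Lean document; each statement's English description precedes it below -/
import Mathlib

section
/- Let H be a separable real Hilbert space and suppose ∫∫ exp(-‖x-y‖²/2) dμ(x) dμ(y) ≥ 0 for every finite signed Borel measure μ on H; i.e., the Gaussian kernel on H is positive definite in the integral sense: for all finite signed measures μ, ∫∫ exp(-‖x-y‖²/2) dμ(x) dμ(y) ≥ 0. -/
/-!
Fix a countable Hilbert basis `(bᵢ)` of `H`. Then
`exp (-‖x - y‖² / 2) = exp (-‖x‖² / 2) * exp (-‖y‖² / 2) * exp (∑ᵢ ⟪bᵢ, x⟫ ⟪bᵢ, y⟫)`, and expanding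
the exponential of the series over all finite words `w` in the basis indices writes the kernel as
`∑_w ψ_w x * ψ_w y / |w|!` with `ψ_w x = exp (-‖x‖² / 2) * ∏ⱼ ⟪b_{w j}, x⟫`. By Parseval and
AM-GM this expansion converges absolutely with sum at most `1`, so it can be integrated term by
term against finite measures, turning the quadratic form into
`∑_w (∫ ψ_w ∂μp - ∫ ψ_w ∂μm)² / |w|! ≥ 0`.
-/

open MeasureTheory Real
open scoped Nat RealInnerProductSpace

section ExpSeries

variable {ι : Type*}

theorem hasSum_prod_fin_pow {c : ι → ℝ} (hc : Summable c) (n : ℕ) :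
    HasSum (fun f : Fin n → ι => ∏ j, c (f j)) ((∑' i, c i) ^ n) := by
  induction n with
  | zero => simp
  | succ n ih =>
    let g : (Fin n → ι) → ℝ := fun f => ∏ j, c (f j)
    have hprod : HasSum (fun p : ι × (Fin n → ι) => c p.1 * g p.2) ((∑' i, c i) * (∑' i, c i) ^ n) :=
      HasSum.mul (f := c) (g := g) hc.hasSum ih
        (summable_mul_of_summable_norm hc.norm ih.summable.norm)
    rw [← (Fin.consEquiv fun _ => ι).hasSum_iff, pow_succ']
    simpa [g, Function.comp_def, Fin.prod_univ_succ] using hprod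

theorem hasSum_exp_tsum_sigma {c : ι → ℝ} (hc : Summable c) :
    HasSum (fun w : Σ n, Fin n → ι => (w.1 ! : ℝ)⁻¹ * ∏ j, c (w.2 j)) (exp (∑' i, c i)) := by
  have hfiber (d : ι → ℝ) (hd : Summable d) (n : ℕ) :
      HasSum (fun f : Fin n → ι => (n ! : ℝ)⁻¹ * ∏ j, d (f j)) ((∑' i, d i) ^ n / n !) := by
    simpa [div_eq_inv_mul] using (hasSum_prod_fin_pow hd n).mul_left (n ! : ℝ)⁻¹
  have habs : Summable fun w : Σ n, Fin n → ι => (w.1 ! : ℝ)⁻¹ * ∏ j, |c (w.2 j)| := by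
    refine (summable_sigma_of_nonneg fun w => by positivity).mpr
      ⟨fun n => (hfiber _ hc.abs n).summable, ?_⟩
    simpa only [(hfiber _ hc.abs _).tsum_eq] using Real.summable_pow_div_factorial _
  have hsum : Summable fun w : Σ n, Fin n → ι => (w.1 ! : ℝ)⁻¹ * ∏ j, c (w.2 j) := by
    refine summable_abs_iff.mp (habs.congr fun w => ?_)
    rw [abs_mul, Finset.abs_prod, abs_of_nonneg (by positivity)]
  have := hsum.hasSum.sigma (hfiber c hc)
  rw [exp_eq_exp_ℝ, (NormedSpace.expSeries_div_hasSum_exp (∑' i, c i)).unique this]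
  exact hsum.hasSum

end ExpSeries

section FeatureExpansion

variable {X W : Type*} [MeasurableSpace X] [Countable W] {k : X → X → ℝ} {ψ : W → X → ℝ}
  {c : W → ℝ} {C : ℝ}

theorem hasSum_integral_integral_of_hasSum_features (hk : Measurable (Function.uncurry k))
    (hψ : ∀ w, Measurable (ψ w)) (hexp : ∀ x y, HasSum (fun w => c w * (ψ w x * ψ w y)) (k x y))
    (hbound : ∀ x y, ∑' w, |c w * (ψ w x * ψ w y)| ≤ C)
    (μ ν : Measure X) [IsFiniteMeasure μ] [IsFiniteMeasure ν] :
    HasSum (fun w => c w * ((∫ x, ψ w x ∂μ) * ∫ y, ψ w y ∂ν)) (∫ x, ∫ y, k x y ∂ν ∂μ) := by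
  set F : W → X × X → ℝ := fun w z => c w * (ψ w z.1 * ψ w z.2)
  have hF_summable (z : X × X) : Summable fun w => |F w z| := (hexp z.1 z.2).summable.abs
  have hF_sum_le (s : Finset W) (z : X × X) : ∑ w ∈ s, |F w z| ≤ C :=
    ((hF_summable z).sum_le_tsum s fun _ _ => abs_nonneg _).trans (hbound z.1 z.2)
  have hF_int (w : W) : Integrable (F w) (μ.prod ν) := by
    refine .of_bound (by fun_prop) C (.of_forall fun z => ?_)
    simpa using hF_sum_le {w} z
  have hF_norm_sum : Summable fun w => ∫ z, ‖F w z‖ ∂μ.prod ν := by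
    refine summable_of_sum_le (c := ∫ _, C ∂μ.prod ν)
      (fun w => integral_nonneg fun z => norm_nonneg _) fun s => ?_
    rw [← integral_finsetSum s fun w _ => (hF_int w).norm]
    exact integral_mono (integrable_finsetSum s fun w _ => (hF_int w).norm)
      (integrable_const C) (hF_sum_le s)
  have hk_int : Integrable (fun z : X × X => k z.1 z.2) (μ.prod ν) := by
    refine .of_bound hk.aestronglyMeasurable C (.of_forall fun ⟨x, y⟩ => ?_)
    rw [Real.norm_eq_abs, ← (hexp x y).tsum_eq]
    exact (norm_tsum_le_tsum_norm (hexp x y).summable.norm).trans (hbound x y)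
  have := hasSum_integral_of_summable_integral_norm hF_int hF_norm_sum
  simp only [F, integral_const_mul, integral_prod_mul, (hexp _ _).tsum_eq] at this
  rwa [integral_prod _ hk_int] at this

theorem integral_integral_quadratic_nonneg_of_hasSum_features (hc : ∀ w, 0 ≤ c w)
    (hk : Measurable (Function.uncurry k))
    (hψ : ∀ w, Measurable (ψ w)) (hexp : ∀ x y, HasSum (fun w => c w * (ψ w x * ψ w y)) (k x y))
    (hbound : ∀ x y, ∑' w, |c w * (ψ w x * ψ w y)| ≤ C)
    (μ ν : Measure X) [IsFiniteMeasure μ] [IsFiniteMeasure ν] :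
    0 ≤ (∫ x, ∫ y, k x y ∂μ ∂μ) + (∫ x, ∫ y, k x y ∂ν ∂ν) - 2 * ∫ x, ∫ y, k x y ∂ν ∂μ := by
  have hμμ := hasSum_integral_integral_of_hasSum_features hk hψ hexp hbound μ μ
  have hνν := hasSum_integral_integral_of_hasSum_features hk hψ hexp hbound ν ν
  have hμν := hasSum_integral_integral_of_hasSum_features hk hψ hexp hbound μ ν
  refine ((hμμ.add hνν).sub (hμν.mul_left 2)).nonneg fun w => ?_
  have hsq : 0 ≤ c w * ((∫ x, ψ w x ∂μ) - ∫ x, ψ w x ∂ν) ^ 2 := by positivity [hc w]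
  linarith

end FeatureExpansion

section GaussianFeatures

variable {ι H : Type*} [NormedAddCommGroup H] [InnerProductSpace ℝ H] (b : HilbertBasis ι ℝ H)

theorem HilbertBasis.hasSum_real_inner_mul_inner (x y : H) :
    HasSum (fun i => ⟪b i, x⟫ * ⟪b i, y⟫) ⟪x, y⟫ := by
  simpa only [real_inner_comm x] using b.hasSum_inner_mul_inner x y

theorem HilbertBasis.tsum_abs_inner_mul_inner_le (x y : H) :
    ∑' i, |⟪b i, x⟫ * ⟪b i, y⟫| ≤ (‖x‖ ^ 2 + ‖y‖ ^ 2) / 2 := by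
  have hsq (z : H) : HasSum (fun i => ⟪b i, z⟫ ^ 2) (‖z‖ ^ 2) := by
    simpa [sq] using b.hasSum_real_inner_mul_inner z z
  have hle (i : ι) : |⟪b i, x⟫ * ⟪b i, y⟫| ≤ (⟪b i, x⟫ ^ 2 + ⟪b i, y⟫ ^ 2) / 2 := by
    rw [abs_mul]
    nlinarith [sq_nonneg (|⟪b i, x⟫| - |⟪b i, y⟫|), sq_abs ⟪b i, x⟫, sq_abs ⟪b i, y⟫]
  exact hasSum_le hle (b.hasSum_real_inner_mul_inner x y).summable.abs.hasSum
    (((hsq x).add (hsq y)).div_const 2)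

noncomputable def gaussianFeature (w : Σ n, Fin n → ι) (x : H) : ℝ :=
  exp (-‖x‖ ^ 2 / 2) * ∏ j, ⟪b (w.2 j), x⟫

theorem continuous_gaussianFeature (w : Σ n, Fin n → ι) : Continuous (gaussianFeature b w) := by
  unfold gaussianFeature
  fun_prop

theorem gaussianFeature_mul_gaussianFeature (w : Σ n, Fin n → ι) (x y : H) :
    gaussianFeature b w x * gaussianFeature b w y =
      exp (-‖x‖ ^ 2 / 2) * exp (-‖y‖ ^ 2 / 2) * ∏ j, ⟪b (w.2 j), x⟫ * ⟪b (w.2 j), y⟫ := by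
  simp only [gaussianFeature, Finset.prod_mul_distrib]
  ring

theorem hasSum_gaussianFeature (x y : H) :
    HasSum (fun w : Σ n, Fin n → ι =>
      (w.1 ! : ℝ)⁻¹ * (gaussianFeature b w x * gaussianFeature b w y)) (exp (-‖x - y‖ ^ 2 / 2)) := by
  have hc := b.hasSum_real_inner_mul_inner x y
  have hval : exp (-‖x - y‖ ^ 2 / 2) =
      exp (-‖x‖ ^ 2 / 2) * exp (-‖y‖ ^ 2 / 2) * exp (∑' i, ⟪b i, x⟫ * ⟪b i, y⟫) := by
    rw [hc.tsum_eq, ← exp_add, ← exp_add, norm_sub_sq_real]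
    ring_nf
  rw [hval]
  refine ((hasSum_exp_tsum_sigma hc.summable).mul_left _).congr_fun fun w => ?_
  rw [gaussianFeature_mul_gaussianFeature]
  ring

theorem tsum_abs_gaussianFeature_le_one (x y : H) :
    ∑' w : Σ n, Fin n → ι,
      |(w.1 ! : ℝ)⁻¹ * (gaussianFeature b w x * gaussianFeature b w y)| ≤ 1 := by
  have habs := (hasSum_exp_tsum_sigma (b.hasSum_real_inner_mul_inner x y).summable.abs).mul_left
    (exp (-‖x‖ ^ 2 / 2) * exp (-‖y‖ ^ 2 / 2))
  calc _ = exp (-‖x‖ ^ 2 / 2) * exp (-‖y‖ ^ 2 / 2) * exp (∑' i, |⟪b i, x⟫ * ⟪b i, y⟫|) := by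
        rw [← habs.tsum_eq]
        congr 1 with w
        rw [gaussianFeature_mul_gaussianFeature, abs_mul, abs_mul, Finset.abs_prod,
          abs_of_pos (by positivity : (0 : ℝ) < exp (-‖x‖ ^ 2 / 2) * exp (-‖y‖ ^ 2 / 2)),
          abs_of_pos (by positivity : (0 : ℝ) < (w.1 ! : ℝ)⁻¹)]
        ring
    _ ≤ exp (-‖x‖ ^ 2 / 2) * exp (-‖y‖ ^ 2 / 2) * exp ((‖x‖ ^ 2 + ‖y‖ ^ 2) / 2) := by
        grw [b.tsum_abs_inner_mul_inner_le x y]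
    _ = 1 := by rw [← exp_add, ← exp_add, ← exp_zero]; ring_nf

end GaussianFeatures

theorem Orthonormal.countable {𝕜 E ι : Type*} [RCLike 𝕜] [NormedAddCommGroup E]
    [InnerProductSpace 𝕜 E] [TopologicalSpace.SeparableSpace E] {v : ι → E}
    (hv : Orthonormal 𝕜 v) : Countable ι := by
  refine Pairwise.countable_of_isOpen_disjoint (s := fun i => Metric.ball (v i) (1 / 2))
    (fun i j hij => Metric.ball_disjoint_ball ?_) (fun _ => Metric.isOpen_ball)
    (fun _ => Metric.nonempty_ball.mpr one_half_pos)
  have hsq : ‖v i - v j‖ ^ 2 = 2 := by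
    rw [@norm_sub_sq 𝕜, hv.1 i, hv.1 j, hv.2 hij]
    norm_num
  rw [dist_eq_norm]
  nlinarith [norm_nonneg (v i - v j)]

theorem stmt2 {H : Type*} [NormedAddCommGroup H] [InnerProductSpace ℝ H]
    [CompleteSpace H] [TopologicalSpace.SeparableSpace H]
    [MeasurableSpace H] [BorelSpace H]
    (μp μm : Measure H) [IsFiniteMeasure μp] [IsFiniteMeasure μm] :
    0 ≤ (∫ x, ∫ y, Real.exp (-‖x - y‖ ^ 2 / 2) ∂μp ∂μp)
        + (∫ x, ∫ y, Real.exp (-‖x - y‖ ^ 2 / 2) ∂μm ∂μm)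
        - 2 * (∫ x, ∫ y, Real.exp (-‖x - y‖ ^ 2 / 2) ∂μm ∂μp) := by
  obtain ⟨s, b, -⟩ := exists_hilbertBasis ℝ H
  have : Countable s := b.orthonormal.countable
  exact integral_integral_quadratic_nonneg_of_hasSum_features (fun _ => by positivity)
    (by fun_prop) (fun w => (continuous_gaussianFeature b w).measurable)
    (hasSum_gaussianFeature b) (tsum_abs_gaussianFeature_le_one b) μp μm
end

section
/- Let (X, 𝒜) be a measurable space, ν a finite measure on ℝ, (k_θ) a jointly measurable family of uniformly bounded kernels on X, and k(x,y) = ∫ k_θ(x,y) dν(θ). Suppose there is a Borel set A ⊆ ℝ with ν(A) > 0 such that for every θ ∈ A and every nonzero μ in a class M of finite signed measures on X, ∫∫ k_θ dμ dμ > 0. Assume also ∫∫ k_θ dμ dμ ≥ 0 for all θ and all μ ∈ M. Then for every nonzero μ ∈ M, ∫∫ k dμ dμ > 0. -/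
open MeasureTheory Real
open scoped BigOperators

/-- The double integral `∫∫ f d(μp - μm) d(μp - μm)` of a bounded measurable function
with respect to the finite signed measure `μ = μp - μm`, written out in terms of the
nonnegative parts. -/
noncomputable def dblInt {X : Type*} [MeasurableSpace X] (f : X → X → ℝ)
    (μp μm : Measure X) : ℝ :=
  (∫ x, ∫ y, f x y ∂μp ∂μp) - (∫ x, ∫ y, f x y ∂μm ∂μp)
    - (∫ x, ∫ y, f x y ∂μp ∂μm) + (∫ x, ∫ y, f x y ∂μm ∂μm)

open MeasureTheory Real

section aux
variable {X : Type*} [MeasurableSpace X]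
  {ν : Measure ℝ} [IsFiniteMeasure ν]
  {k : ℝ → X → X → ℝ}

lemma hF_meas (hmeas : Measurable (fun p : X × X × ℝ => k p.2.2 p.1 p.2.1)) :
    Measurable (fun q : (X × X) × ℝ => k q.2 q.1.1 q.1.2) :=
  hmeas.comp (by fun_prop : Measurable (fun q : (X × X) × ℝ => (q.1.1, q.1.2, q.2)))

lemma swap_lemma (hmeas : Measurable (fun p : X × X × ℝ => k p.2.2 p.1 p.2.1))
    {C : ℝ} (hC : ∀ θ x y, |k θ x y| ≤ C)
    (μ1 μ2 : Measure X) [IsFiniteMeasure μ1] [IsFiniteMeasure μ2] :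
    (∫ x, ∫ y, ∫ θ, k θ x y ∂ν ∂μ2 ∂μ1)
      = ∫ θ, ∫ x, ∫ y, k θ x y ∂μ2 ∂μ1 ∂ν := by
  have hF := hF_meas hmeas
  have hFint : Integrable (fun q : (X × X) × ℝ => k q.2 q.1.1 q.1.2) ((μ1.prod μ2).prod ν) :=
    (integrable_const C).mono' hF.aestronglyMeasurable
      (ae_of_all _ fun q => by simpa [Real.norm_eq_abs] using hC _ _ _)
  have hg : Integrable (fun p : X × X => ∫ θ, k θ p.1 p.2 ∂ν) (μ1.prod μ2) := by
    refine (integrable_const (C * (ν Set.univ).toReal)).mono'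
      hF.stronglyMeasurable.integral_prod_right'.aestronglyMeasurable
      (ae_of_all _ fun p => ?_)
    exact norm_integral_le_of_norm_le_const
      (ae_of_all _ fun θ => by simpa [Real.norm_eq_abs] using hC θ p.1 p.2)
  calc (∫ x, ∫ y, ∫ θ, k θ x y ∂ν ∂μ2 ∂μ1)
      = ∫ p : X × X, ∫ θ, k θ p.1 p.2 ∂ν ∂(μ1.prod μ2) := (integral_prod _ hg).symm
    _ = ∫ θ, ∫ p : X × X, k θ p.1 p.2 ∂(μ1.prod μ2) ∂ν := integral_integral_swap hFint
    _ = ∫ θ, ∫ x, ∫ y, k θ x y ∂μ2 ∂μ1 ∂ν := by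
        refine integral_congr_ae (ae_of_all _ fun θ => ?_)
        refine integral_prod (fun p : X × X => k θ p.1 p.2) ?_
        refine (integrable_const C).mono' ?_
          (ae_of_all _ fun q => by simpa [Real.norm_eq_abs] using hC _ _ _)
        exact (hF.comp (by fun_prop :
          Measurable (fun p : X × X => (p, θ)))).aestronglyMeasurable

lemma intT (hmeas : Measurable (fun p : X × X × ℝ => k p.2.2 p.1 p.2.1))
    {C : ℝ} (hC : ∀ θ x y, |k θ x y| ≤ C)
    (μ1 μ2 : Measure X) [IsFiniteMeasure μ1] [IsFiniteMeasure μ2] :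
    Integrable (fun θ => ∫ x, ∫ y, k θ x y ∂μ2 ∂μ1) ν := by
  have hF := hF_meas hmeas
  have he : (fun θ => ∫ x, ∫ y, k θ x y ∂μ2 ∂μ1)
      = fun θ => ∫ p : X × X, k θ p.1 p.2 ∂(μ1.prod μ2) := by
    funext θ
    refine (integral_prod (fun p : X × X => k θ p.1 p.2) ?_).symm
    refine (integrable_const C).mono' ?_
      (ae_of_all _ fun q => by simpa [Real.norm_eq_abs] using hC _ _ _)
    exact (hF.comp (by fun_prop :
      Measurable (fun p : X × X => (p, θ)))).aestronglyMeasurable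
  rw [he]
  refine (integrable_const (C * ((μ1.prod μ2) Set.univ).toReal)).mono'
    hF.stronglyMeasurable.integral_prod_left'.aestronglyMeasurable
    (ae_of_all _ fun θ => ?_)
  exact norm_integral_le_of_norm_le_const
    (ae_of_all _ fun p => by simpa [Real.norm_eq_abs] using hC θ p.1 p.2)

end aux
theorem stmt4 {X : Type*} [MeasurableSpace X]
    (ν : Measure ℝ) [IsFiniteMeasure ν]
    (k : ℝ → X → X → ℝ)
    (hmeas : Measurable (fun p : X × X × ℝ => k p.2.2 p.1 p.2.1))
    (C : ℝ) (hC : ∀ θ x y, |k θ x y| ≤ C)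
    (hsymm : ∀ θ x y, k θ x y = k θ y x)
    (hpd : ∀ (θ : ℝ) (n : ℕ) (c : Fin n → ℝ) (x : Fin n → X),
      0 ≤ ∑ i, ∑ j, c i * c j * k θ (x i) (x j))
    (M : Set (Measure X × Measure X))
    (hMfin : ∀ p ∈ M, IsFiniteMeasure p.1 ∧ IsFiniteMeasure p.2)
    (A : Set ℝ) (hA : MeasurableSet A) (hApos : 0 < ν A)
    (hstrict : ∀ θ ∈ A, ∀ p ∈ M, p.1 ≠ p.2 → 0 < dblInt (k θ) p.1 p.2)
    (hnonneg : ∀ (θ : ℝ), ∀ p ∈ M, 0 ≤ dblInt (k θ) p.1 p.2) :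
    ∀ p ∈ M, p.1 ≠ p.2 →
      0 < dblInt (fun x y => ∫ θ, k θ x y ∂ν) p.1 p.2 := by
  intro p hp hne
  obtain ⟨h1, h2⟩ := hMfin p hp
  haveI := h1; haveI := h2
  have i11 := intT (ν := ν) hmeas hC p.1 p.1
  have i12 := intT (ν := ν) hmeas hC p.1 p.2
  have i21 := intT (ν := ν) hmeas hC p.2 p.1
  have i22 := intT (ν := ν) hmeas hC p.2 p.2
  have j1 : Integrable (fun θ => (∫ x, ∫ y, k θ x y ∂p.1 ∂p.1)
      - ∫ x, ∫ y, k θ x y ∂p.2 ∂p.1) ν := i11.sub i12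
  have j2 : Integrable (fun θ => ((∫ x, ∫ y, k θ x y ∂p.1 ∂p.1)
      - ∫ x, ∫ y, k θ x y ∂p.2 ∂p.1) - ∫ x, ∫ y, k θ x y ∂p.1 ∂p.2) ν := j1.sub i21
  have key : dblInt (fun x y => ∫ θ, k θ x y ∂ν) p.1 p.2
      = ∫ θ, dblInt (k θ) p.1 p.2 ∂ν := by
    unfold dblInt
    rw [swap_lemma hmeas hC p.1 p.1, swap_lemma hmeas hC p.1 p.2,
      swap_lemma hmeas hC p.2 p.1, swap_lemma hmeas hC p.2 p.2,
      ← integral_sub i11 i12, ← integral_sub j1 i21, ← integral_add j2 i22]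
  have hint : Integrable (fun θ => dblInt (k θ) p.1 p.2) ν := by
    unfold dblInt; exact j2.add i22
  rw [key, integral_pos_iff_support_of_nonneg_ae
    (ae_of_all _ fun θ => hnonneg θ p hp) hint]
  refine lt_of_lt_of_le hApos (measure_mono fun θ hθ => ?_)
  exact ne_of_gt (hstrict θ hθ p hp hne)
end

section
/- Let (X, ρ) be a metric space of negative type, i.e., for all n ∈ ℕ, c₁,…,c_n ∈ ℝ with Σ c_i = 0, and x₁,…,x_n ∈ X, one has Σ_{i,j} c_i c_j ρ(x_i, x_j) ≤ 0. Fix z₀ ∈ X and define k(x,y) = ρ(x,z₀) + ρ(y,z₀) - ρ(x,y). Then k is positive definite: for all n, all c₁,…,c_n ∈ ℝ (not necessarily summing to zero), and all x₁,…,x_n ∈ X, Σ_{i,j} c_i c_j k(x_i, x_j) ≥ 0. -/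
/-!
Append `z₀` with weight `-∑ cᵢ` to the configuration. The extended weights sum to zero, and the
negative-type inequality for the extended configuration, `D - 2 S T ≤ 0` with
`S = ∑ cᵢ`, `T = ∑ cᵢ ρ(xᵢ, z₀)`, `D = ∑ cᵢ cⱼ ρ(xᵢ, xⱼ)`, is exactly the claim, since the
kernel form expands to `2 S T - D`.
-/

open Finset

theorem sum_sum_mul_mul_add_sub {ι R : Type*} [Fintype ι] [CommRing R]
    (c f : ι → R) (g : ι → ι → R) :
    ∑ i, ∑ j, c i * c j * (f i + f j - g i j) =
      2 * (∑ i, c i) * (∑ i, c i * f i) - ∑ i, ∑ j, c i * c j * g i j := by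
  have hleft : ∑ i, ∑ j, c i * c j * f i = (∑ i, c i) * ∑ i, c i * f i := by
    rw [mul_comm, sum_mul_sum]
    exact sum_congr rfl fun i _ => sum_congr rfl fun j _ => by ring
  have hright : ∑ i, ∑ j, c i * c j * f j = (∑ i, c i) * ∑ i, c i * f i := by
    rw [sum_mul_sum]
    exact sum_congr rfl fun i _ => sum_congr rfl fun j _ => by ring
  simp only [mul_sub, mul_add, sum_add_distrib, sum_sub_distrib, hleft, hright]
  ring

theorem sum_sum_snoc_mul_dist {X : Type*} [PseudoMetricSpace X] {n : ℕ}
    (c : Fin n → ℝ) (a : ℝ) (x : Fin n → X) (z : X) :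
    ∑ i, ∑ j, Fin.snoc (α := fun _ => ℝ) c a i * Fin.snoc (α := fun _ => ℝ) c a j *
        dist (Fin.snoc (α := fun _ => X) x z i) (Fin.snoc (α := fun _ => X) x z j) =
      ∑ i, ∑ j, c i * c j * dist (x i) (x j) + 2 * a * ∑ i, c i * dist (x i) z := by
  simp only [Fin.sum_univ_castSucc, Fin.snoc_castSucc, Fin.snoc_last, dist_self, mul_zero,
    add_zero, sum_add_distrib, dist_comm z, mul_sum]
  rw [add_assoc, ← sum_add_distrib]
  congr 1
  exact sum_congr rfl fun i _ => by ring

theorem stmt6 {X : Type*} [MetricSpace X]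
    (hneg : ∀ (n : ℕ) (c : Fin n → ℝ) (x : Fin n → X), (∑ i, c i) = 0 →
      ∑ i, ∑ j, c i * c j * dist (x i) (x j) ≤ 0)
    (z₀ : X) :
    ∀ (n : ℕ) (c : Fin n → ℝ) (x : Fin n → X),
      0 ≤ ∑ i, ∑ j, c i * c j *
        (dist (x i) z₀ + dist (x j) z₀ - dist (x i) (x j)) := by
  intro n c x
  have hext := hneg (n + 1) (Fin.snoc c (-∑ i, c i)) (Fin.snoc x z₀)
    (by simp [Fin.sum_univ_castSucc])
  rw [sum_sum_snoc_mul_dist] at hext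
  rw [sum_sum_mul_mul_add_sub]
  linarith
end

section
/- Let (X, ρ) be a metric space, z₀ ∈ X fixed, k(x,y) = ρ(x,z₀) + ρ(y,z₀) - ρ(x,y), and let μ be a finite signed Borel measure on X with μ(X) = 0. Define the signed measure μ̃ by dμ̃(x) = exp(-ρ(x,z₀)) dμ(x). Then ∫∫ exp(-ρ(x,y)) dμ(x) dμ(y) = Σ_{ℓ=0}^∞ (1/ℓ!) ∫∫ k(x,y)^ℓ dμ̃(x) dμ̃(y), where the series converges. -/
open MeasureTheory Real

/-- The measure `μ̃` with density `x ↦ exp (-dist x z₀)` with respect to `μ`. -/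
noncomputable def tilt {X : Type*} [MetricSpace X] [MeasurableSpace X]
    (z₀ : X) (μ : Measure X) : Measure X :=
  μ.withDensity fun x => ENNReal.ofReal (Real.exp (-dist x z₀))

/-! Writing `a x = ρ(x, z₀)`, one has `exp (-ρ(x, y)) = exp (-a x) * exp (-a y) * exp (k x y)`,
and expanding `exp (k x y)` into its power series writes `exp (-ρ(x, y))` as a series of
nonnegative continuous functions, since `k ≥ 0` by the triangle inequality. For finite measures
both integrations then commute with the summation, by dominated convergence with the sum
`exp (-ρ(x, y)) ≤ 1` itself as dominating function. The signed double integrals are linear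
combinations of four such iterated integrals of nonnegative measures. -/

theorem hasSum_integral_of_nonneg {ι α : Type*} [Countable ι] [MeasurableSpace α]
    {μ : Measure α} {F : ι → α → ℝ} {f : α → ℝ} (hF_meas : ∀ n, AEStronglyMeasurable (F n) μ)
    (hF_nonneg : ∀ n a, 0 ≤ F n a) (hf : Integrable f μ) (h_lim : ∀ a, HasSum (F · a) (f a)) :
    HasSum (fun n => ∫ a, F n a ∂μ) (∫ a, f a ∂μ) := by
  refine hasSum_integral_of_dominated_convergence F hF_meas
    (fun n => ae_of_all _ fun a => (Real.norm_of_nonneg (hF_nonneg n a)).le)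
    (ae_of_all _ fun a => (h_lim a).summable) ?_ (ae_of_all _ h_lim)
  simpa only [fun a => (h_lim a).tsum_eq] using hf

section IteratedIntegral

variable {X Y : Type*} [TopologicalSpace X] [FirstCountableTopology X]
  [TopologicalSpace Y] [MeasurableSpace Y] [OpensMeasurableSpace Y]

theorem continuous_integral_of_bounded {f : X → Y → ℝ} (hf : Continuous (Function.uncurry f))
    {C : ℝ} (hC : ∀ x y, |f x y| ≤ C) (μ : Measure Y) [IsFiniteMeasure μ] :
    Continuous fun x => ∫ y, f x y ∂μ :=
  continuous_of_dominated (bound := fun _ => C)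
    (fun x => (hf.comp (Continuous.prodMk_right x)).aestronglyMeasurable)
    (fun x => ae_of_all _ fun y => hC x y) (integrable_const C)
    (ae_of_all _ fun y => hf.comp (Continuous.prodMk_left y))

variable [MeasurableSpace X] [OpensMeasurableSpace X]

theorem integrable_integral_of_bounded {f : X → Y → ℝ} (hf : Continuous (Function.uncurry f))
    {C : ℝ} (hC : ∀ x y, |f x y| ≤ C) (μ : Measure Y) [IsFiniteMeasure μ]
    (ν : Measure X) [IsFiniteMeasure ν] :
    Integrable (fun x => ∫ y, f x y ∂μ) ν := by
  refine Integrable.of_bound (C := C * μ.real Set.univ)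
    (continuous_integral_of_bounded hf hC μ).aestronglyMeasurable (ae_of_all _ fun x => ?_)
  have h_norm : ∀ᵐ y ∂μ, ‖f x y‖ ≤ C := ae_of_all _ fun y => hC x y
  simpa [mul_comm] using norm_integral_le_of_norm_le_const h_norm

theorem hasSum_iteratedIntegral_of_nonneg {ι : Type*} [Countable ι] {F : ι → X → Y → ℝ} {f : X → Y → ℝ}
    (hF : ∀ n, Continuous (Function.uncurry (F n))) (hf : Continuous (Function.uncurry f))
    (hF_nonneg : ∀ n x y, 0 ≤ F n x y) {C : ℝ} (hfC : ∀ x y, f x y ≤ C)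
    (h_lim : ∀ x y, HasSum (F · x y) (f x y)) (μ : Measure Y) [IsFiniteMeasure μ]
    (ν : Measure X) [IsFiniteMeasure ν] :
    HasSum (fun n => ∫ x, ∫ y, F n x y ∂μ ∂ν) (∫ x, ∫ y, f x y ∂μ ∂ν) := by
  have hf_nonneg x y : 0 ≤ f x y := (h_lim x y).nonneg fun n => hF_nonneg n x y
  have hf_abs x y : |f x y| ≤ C := (abs_of_nonneg (hf_nonneg x y)).trans_le (hfC x y)
  have hF_abs n x y : |F n x y| ≤ C :=
    (abs_of_nonneg (hF_nonneg n x y)).trans_le <|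
      (le_hasSum (h_lim x y) n fun m _ => hF_nonneg m x y).trans (hfC x y)
  refine hasSum_integral_of_nonneg
    (fun n => (continuous_integral_of_bounded (hF n) (hF_abs n) μ).aestronglyMeasurable)
    (fun n x => integral_nonneg (hF_nonneg n x)) (integrable_integral_of_bounded hf hf_abs μ ν)
    fun x => hasSum_integral_of_nonneg ?_ (hF_nonneg · x) ?_ (h_lim x)
  · exact fun n => ((hF n).comp (Continuous.prodMk_right x)).aestronglyMeasurable
  · exact Integrable.of_bound (hf.comp (Continuous.prodMk_right x)).aestronglyMeasurable C
      (ae_of_all _ fun y => hf_abs x y)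

end IteratedIntegral

theorem hasSum_exp_neg_dist {X : Type*} [MetricSpace X] (z₀ x y : X) :
    HasSum (fun ℓ : ℕ => Real.exp (-dist x z₀) * Real.exp (-dist y z₀) *
      ((dist x z₀ + dist y z₀ - dist x y) ^ ℓ / ℓ.factorial)) (Real.exp (-dist x y)) := by
  have h_split : Real.exp (-dist x y) = Real.exp (-dist x z₀) * Real.exp (-dist y z₀) *
      Real.exp (dist x z₀ + dist y z₀ - dist x y) := by
    rw [← Real.exp_add, ← Real.exp_add]
    congr 1
    ring
  rw [h_split]
  exact (Real.exp_eq_exp_ℝ ▸ NormedSpace.expSeries_div_hasSum_exp _).mul_left _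

section Tilt

variable {X : Type*} [MetricSpace X] [MeasurableSpace X] [BorelSpace X]

theorem integral_tilt (z₀ : X) (μ : Measure X) (g : X → ℝ) :
    ∫ x, g x ∂tilt z₀ μ = ∫ x, Real.exp (-dist x z₀) * g x ∂μ := by
  rw [tilt, integral_withDensity_eq_integral_toReal_smul (by fun_prop)
    (ae_of_all _ fun _ => ENNReal.ofReal_lt_top)]
  simp only [ENNReal.toReal_ofReal (Real.exp_nonneg _), smul_eq_mul]

theorem hasSum_iteratedIntegral_tilt (z₀ : X) (μ₁ μ₂ : Measure X) [IsFiniteMeasure μ₁]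
    [IsFiniteMeasure μ₂] :
    HasSum (fun ℓ : ℕ => (1 / (Nat.factorial ℓ) : ℝ) *
      ∫ x, ∫ y, (dist x z₀ + dist y z₀ - dist x y) ^ ℓ ∂(tilt z₀ μ₁) ∂(tilt z₀ μ₂))
      (∫ x, ∫ y, Real.exp (-dist x y) ∂μ₁ ∂μ₂) := by
  have hk_nonneg (x y : X) : 0 ≤ dist x z₀ + dist y z₀ - dist x y := by
    linarith [dist_triangle_right x y z₀]
  convert hasSum_iteratedIntegral_of_nonneg (fun ℓ => by fun_prop) (by fun_prop)
    (fun ℓ x y => by have := hk_nonneg x y; positivity)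
    (fun x y => Real.exp_le_one_iff.mpr (neg_nonpos.mpr dist_nonneg))
    (hasSum_exp_neg_dist z₀) μ₁ μ₂ using 2 with ℓ
  simp only [integral_tilt, ← integral_const_mul]
  refine integral_congr_ae (ae_of_all _ fun x => integral_congr_ae (ae_of_all _ fun y => ?_))
  ring

end Tilt

theorem stmt9_general {X : Type*} [MetricSpace X] [MeasurableSpace X] [BorelSpace X]
    (z₀ : X) (μp μm : Measure X) [IsFiniteMeasure μp] [IsFiniteMeasure μm] :
    Summable (fun ℓ : ℕ => (1 / (Nat.factorial ℓ) : ℝ) *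
      dblInt (fun x y => (dist x z₀ + dist y z₀ - dist x y) ^ ℓ)
        (tilt z₀ μp) (tilt z₀ μm)) ∧
    dblInt (fun x y => Real.exp (-dist x y)) μp μm
      = ∑' ℓ : ℕ, (1 / (Nat.factorial ℓ) : ℝ) *
          dblInt (fun x y => (dist x z₀ + dist y z₀ - dist x y) ^ ℓ)
            (tilt z₀ μp) (tilt z₀ μm) := by
  have h := (((hasSum_iteratedIntegral_tilt z₀ μp μp).sub
    (hasSum_iteratedIntegral_tilt z₀ μm μp)).sub
    (hasSum_iteratedIntegral_tilt z₀ μp μm)).add (hasSum_iteratedIntegral_tilt z₀ μm μm)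
  simp only [← mul_sub, ← mul_add] at h
  exact ⟨h.summable, h.tsum_eq.symm⟩

theorem stmt9 {X : Type*} [MetricSpace X] [MeasurableSpace X] [BorelSpace X]
    (z₀ : X) (μp μm : Measure X) [IsFiniteMeasure μp] [IsFiniteMeasure μm]
    (hzero : μp Set.univ = μm Set.univ) :
    Summable (fun ℓ : ℕ => (1 / (Nat.factorial ℓ) : ℝ) *
      dblInt (fun x y => (dist x z₀ + dist y z₀ - dist x y) ^ ℓ)
        (tilt z₀ μp) (tilt z₀ μm)) ∧
    dblInt (fun x y => Real.exp (-dist x y)) μp μm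
      = ∑' ℓ : ℕ, (1 / (Nat.factorial ℓ) : ℝ) *
          dblInt (fun x y => (dist x z₀ + dist y z₀ - dist x y) ^ ℓ)
            (tilt z₀ μp) (tilt z₀ μm) :=
  stmt9_general z₀ μp μm
end
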